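/- arXiv:math/9805077 — 2 statements merged into one kernel-verified Lean document; each statement's English description precedes it below -/
import Mathlib

section
/- Let (G, D) be a connection of rank μ, G₀ a lattice, (g₁,…,g_μ) a ℂ[θ]-basis of G₀ and A₀, A₁ ∈ M_μ(ℂ) constant matrices with t(gᵢ) = Σⱼ (A₀)ᵢⱼ·gⱼ + Σⱼ (A₁)ᵢⱼ·θ·gⱼ for all i. Assume that A₁ + k·Id is invertible for every integer k ≥ 0. Then, writing g for the column vector (g₁,…,g_μ), T for the map applying t entrywise, and (T − A₀)h := T(h) − A₀·h for a column vector h of elements of G, one has for every k ≥ 1: θ^k·g = (A₁ + (k−1)·Id)⁻¹(T − A₀) ∘ ⋯ ∘ (A₁ + Id)⁻¹(T − A₀) ∘ (A₁)⁻¹(T − A₀) applied to g (k factors). Consequently, G₀ equals the smallest ℂ-subspace of G containing g₁,…,g_μ and stable under t. -/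
open LaurentPolynomial

set_option synthInstance.maxHeartbeats 1000000
set_option maxHeartbeats 2000000

noncomputable section

/-- The ring `ℂ[τ,τ⁻¹]` of Laurent polynomials. -/
abbrev 𝕃 : Type := LaurentPolynomial ℂ

/-- the variable `τ` -/
noncomputable def τ : 𝕃 := T 1

/-- `θ := τ⁻¹` -/
noncomputable def θ : 𝕃 := T (-1)

/-- `ℂ[τ]` as a subring (subalgebra) of `ℂ[τ,τ⁻¹]` -/
noncomputable def Cτ : Subalgebra ℂ 𝕃 := Algebra.adjoin ℂ {τ}

/-- `ℂ[θ]` as a subring (subalgebra) of `ℂ[τ,τ⁻¹]` -/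
noncomputable def Cθ : Subalgebra ℂ 𝕃 := Algebra.adjoin ℂ {θ}

variable {G : Type} [AddCommGroup G] [Module ℂ G] [Module 𝕃 G] [IsScalarTower ℂ 𝕃 G]

/-- scalar multiplication by a Laurent polynomial, as a `ℂ`-linear endomorphism -/
noncomputable def smulL (p : 𝕃) : G →ₗ[ℂ] G := p • (LinearMap.id : G →ₗ[ℂ] G)

variable {μ : ℕ}

/-- iterated application: `seqApply F g k = F (k-1) (⋯ (F 1 (F 0 g)))`. -/
noncomputable def seqApply (F : ℕ → (Fin μ → G) → (Fin μ → G)) (g : Fin μ → G) :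
    ℕ → (Fin μ → G)
  | 0 => g
  | (k + 1) => F k (seqApply F g k)

/-- one step `(A₁ + ℓ·Id)⁻¹ (T − A₀)` applied to a column vector of elements of `G`. -/
noncomputable def step (D : G →ₗ[ℂ] G) (A₀ A₁ : Matrix (Fin μ) (Fin μ) ℂ) (ℓ : ℕ)
    (h : Fin μ → G) : Fin μ → G :=
  fun i => ∑ j, ((A₁ + (ℓ : ℂ) • (1 : Matrix (Fin μ) (Fin μ) ℂ))⁻¹ i j) •
    ((-(D (h j))) - ∑ j', A₀ j j' • h j')


lemma tau_theta : τ * θ = 1 := by rw [τ, θ, ← T_add]; norm_num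

lemma d_theta (dτ : Derivation ℂ 𝕃 𝕃) (hdτ : dτ τ = 1) : dτ θ = -θ ^ 2 := by
  have h := dτ.leibniz τ θ
  rw [tau_theta, hdτ, Derivation.map_one_eq_zero, smul_eq_mul, smul_eq_mul, mul_one] at h
  have h2 : τ * dτ θ = -θ := by linear_combination -h
  calc dτ θ = (θ * τ) * dτ θ := by rw [mul_comm θ τ, tau_theta, one_mul]
  _ = θ * (τ * dτ θ) := mul_assoc _ _ _
  _ = -θ ^ 2 := by rw [h2]; ring

lemma d_theta_pow (dτ : Derivation ℂ 𝕃 𝕃) (hdτ : dτ τ = 1) (ℓ : ℕ) :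
    dτ (θ ^ ℓ) = -(ℓ : 𝕃) * θ ^ (ℓ + 1) := by
  induction ℓ with
  | zero => simp
  | succ n ih =>
    rw [pow_succ, Derivation.leibniz, ih, d_theta dτ hdτ, smul_eq_mul, smul_eq_mul]
    push_cast; ring

lemma neg_D_pow_smul {G : Type} [AddCommGroup G] [Module ℂ G] [Module 𝕃 G]
    [IsScalarTower ℂ 𝕃 G] (dτ : Derivation ℂ 𝕃 𝕃) (hdτ : dτ τ = 1)
    (D : G →ₗ[ℂ] G) (hD : ∀ (p : 𝕃) (g : G), D (p • g) = dτ p • g + p • D g)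
    (ℓ : ℕ) (x : G) :
    -(D ((θ ^ ℓ : 𝕃) • x)) = (ℓ : ℂ) • ((θ ^ (ℓ + 1) : 𝕃) • x) + (θ ^ ℓ : 𝕃) • (-(D x)) := by
  have hcast : ((ℓ : 𝕃)) • ((θ ^ (ℓ + 1) : 𝕃) • x) = (ℓ : ℂ) • ((θ ^ (ℓ + 1) : 𝕃) • x) := by
    rw [Nat.cast_smul_eq_nsmul, Nat.cast_smul_eq_nsmul]
  rw [hD, d_theta_pow dτ hdτ, neg_mul, neg_smul, mul_smul, hcast, smul_neg]
  abel

lemma step_pow {G : Type} [AddCommGroup G] [Module ℂ G] [Module 𝕃 G] [IsScalarTower ℂ 𝕃 G]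
    {μ : ℕ} (dτ : Derivation ℂ 𝕃 𝕃) (hdτ : dτ τ = 1)
    (D : G →ₗ[ℂ] G) (hD : ∀ (p : 𝕃) (g : G), D (p • g) = dτ p • g + p • D g)
    (g : Fin μ → G) (A₀ A₁ : Matrix (Fin μ) (Fin μ) ℂ)
    (hmat : ∀ i, -(D (g i)) = (∑ j, A₀ i j • g j) + ∑ j, A₁ i j • (θ • g j))
    (hinv : ∀ k : ℕ, IsUnit (A₁ + (k : ℂ) • (1 : Matrix (Fin μ) (Fin μ) ℂ))) (ℓ : ℕ) :
    step D A₀ A₁ ℓ (fun i => (θ ^ ℓ : 𝕃) • g i) = fun i => (θ ^ (ℓ + 1) : 𝕃) • g i := by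
  funext i
  set B := A₁ + (ℓ : ℂ) • (1 : Matrix (Fin μ) (Fin μ) ℂ) with hBdef
  have hB : B⁻¹ * B = 1 :=
    Matrix.nonsing_inv_mul _ ((Matrix.isUnit_iff_isUnit_det _).mp (hinv ℓ))
  have inner : ∀ j, (-(D ((θ ^ ℓ : 𝕃) • g j))) - ∑ j', A₀ j j' • (θ ^ ℓ : 𝕃) • g j'
      = ∑ j', B j j' • ((θ ^ (ℓ + 1) : 𝕃) • g j') := by
    intro j
    rw [neg_D_pow_smul dτ hdτ D hD, hmat j, smul_add]
    have h1 : (θ ^ ℓ : 𝕃) • (∑ j', A₀ j j' • g j') = ∑ j', A₀ j j' • ((θ ^ ℓ : 𝕃) • g j') := by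
      rw [Finset.smul_sum]; exact Finset.sum_congr rfl fun j' _ => smul_comm _ _ _
    have h2 : (θ ^ ℓ : 𝕃) • (∑ j', A₁ j j' • (θ • g j'))
        = ∑ j', A₁ j j' • ((θ ^ (ℓ + 1) : 𝕃) • g j') := by
      rw [Finset.smul_sum]; refine Finset.sum_congr rfl fun j' _ => ?_
      rw [smul_comm, ← mul_smul, ← pow_succ]
    have h3 : (ℓ : ℂ) • ((θ ^ (ℓ + 1) : 𝕃) • g j)
        = ∑ j', ((ℓ : ℂ) • (1 : Matrix (Fin μ) (Fin μ) ℂ)) j j' • ((θ ^ (ℓ + 1) : 𝕃) • g j') := by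
      simp [Matrix.smul_apply, Matrix.one_apply, mul_ite, ite_smul]
    rw [h1, h2, h3]
    simp only [hBdef, Matrix.add_apply, add_smul, Finset.sum_add_distrib]
    abel
  show ∑ j, B⁻¹ i j • ((-(D ((θ ^ ℓ : 𝕃) • g j))) - ∑ j', A₀ j j' • (θ ^ ℓ : 𝕃) • g j')
      = (θ ^ (ℓ + 1) : 𝕃) • g i
  simp only [inner]
  calc ∑ j, B⁻¹ i j • ∑ j', B j j' • ((θ ^ (ℓ + 1) : 𝕃) • g j')
      = ∑ j', (∑ j, B⁻¹ i j * B j j') • ((θ ^ (ℓ + 1) : 𝕃) • g j') := by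
        simp only [Finset.smul_sum, smul_smul]
        rw [Finset.sum_comm]
        simp [Finset.sum_smul]
  _ = (θ ^ (ℓ + 1) : 𝕃) • g i := by
        simp only [← Matrix.mul_apply, hB, Matrix.one_apply, ite_smul, one_smul, zero_smul]
        simp

theorem statement2 (μ : ℕ) (G : Type) [AddCommGroup G] [Module ℂ G] [Module 𝕃 G]
    [IsScalarTower ℂ 𝕃 G] [Module.Free 𝕃 G] (hrank : Module.finrank 𝕃 G = μ)
    (dτ : Derivation ℂ 𝕃 𝕃) (hdτ : dτ τ = 1)
    (D : G →ₗ[ℂ] G) (hD : ∀ (p : 𝕃) (g : G), D (p • g) = dτ p • g + p • D g)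
    (G₀ : Submodule Cθ G) (hFG : G₀.FG) (hfree : Module.Free Cθ G₀)
    (hspan : Submodule.span 𝕃 (G₀ : Set G) = ⊤)
    (hstab : ∀ g ∈ G₀, -(D g) ∈ G₀)
    (g : Fin μ → G) (hg₀ : ∀ i, g i ∈ G₀) (hgind : LinearIndependent Cθ g)
    (hgspan : Submodule.span Cθ (Set.range g) = G₀)
    (A₀ A₁ : Matrix (Fin μ) (Fin μ) ℂ)
    (hmat : ∀ i, -(D (g i)) = (∑ j, A₀ i j • g j) + ∑ j, A₁ i j • (θ • g j))
    (hinv : ∀ k : ℕ, IsUnit (A₁ + (k : ℂ) • (1 : Matrix (Fin μ) (Fin μ) ℂ))) :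
    (∀ k : ℕ, 1 ≤ k → ∀ i, (θ ^ k : 𝕃) • g i = seqApply (step D A₀ A₁) g k i) ∧
    (G₀ : Set G) =
      ↑(sInf {W : Submodule ℂ G | (∀ i, g i ∈ W) ∧ ∀ x ∈ W, -(D x) ∈ W}) := by
  have hpow : ∀ k : ℕ, ∀ i, (θ ^ k : 𝕃) • g i = seqApply (step D A₀ A₁) g k i := by
    intro k
    induction k with
    | zero => intro i; simp [seqApply]
    | succ n ih =>
      intro i
      have h : seqApply (step D A₀ A₁) g n = fun i => (θ ^ n : 𝕃) • g i :=
        funext fun i => (ih i).symm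
      show _ = step D A₀ A₁ n (seqApply (step D A₀ A₁) g n) i
      rw [h, step_pow dτ hdτ D hD g A₀ A₁ hmat hinv n]
  refine ⟨fun k _ i => hpow k i, ?_⟩
  set S : Set (Submodule ℂ G) := {W | (∀ i, g i ∈ W) ∧ ∀ x ∈ W, -(D x) ∈ W} with hS
  have hsub2 : (G₀ : Set G) ⊆ ↑(sInf S) := by
    intro x hx
    rw [SetLike.mem_coe, Submodule.mem_sInf]
    intro W hW
    have hseq : ∀ k, ∀ i, seqApply (step D A₀ A₁) g k i ∈ W := by
      intro k
      induction k with
      | zero => exact hW.1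
      | succ n ih =>
        intro i
        show step D A₀ A₁ n (seqApply (step D A₀ A₁) g n) i ∈ W
        exact Submodule.sum_mem _ fun j _ => Submodule.smul_mem _ _
          (Submodule.sub_mem _ (hW.2 _ (ih j))
            (Submodule.sum_mem _ fun j' _ => Submodule.smul_mem _ _ (ih j')))
    have hpowmem : ∀ k i, (θ ^ k : 𝕃) • g i ∈ W := fun k i => (hpow k i) ▸ hseq k i
    have hCθ : ∀ p ∈ Cθ, ∀ i, p • g i ∈ W := by
      intro p hp i
      have hp' : p ∈ Submodule.span ℂ ((Submonoid.closure ({θ} : Set 𝕃) : Submonoid 𝕃) : Set 𝕃) := by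
        have := Algebra.adjoin_eq_span ℂ ({θ} : Set 𝕃)
        rw [Cθ] at hp
        rw [← this]
        exact hp
      clear hp
      induction hp' using Submodule.span_induction with
      | mem y hy =>
        obtain ⟨n, rfl⟩ := Submonoid.mem_closure_singleton.mp hy
        exact hpowmem n i
      | zero => simp only [zero_smul]; exact W.zero_mem
      | add a b _ _ ha hb => rw [add_smul]; exact W.add_mem ha hb
      | smul c a _ ha => rw [smul_assoc]; exact W.smul_mem c ha
    rw [SetLike.mem_coe, ← hgspan, Submodule.mem_span_range_iff_exists_fun] at hx
    obtain ⟨c, rfl⟩ := hx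
    exact Submodule.sum_mem _ fun i _ => hCθ ((c i : 𝕃)) (c i).2 i
  have hsub1 : (↑(sInf S) : Set G) ⊆ (G₀ : Set G) := by
    intro x hx
    let W₀ : Submodule ℂ G :=
      { carrier := G₀
        add_mem' := fun ha hb => G₀.add_mem ha hb
        zero_mem' := G₀.zero_mem
        smul_mem' := fun c y hy => by
          have h1 : (⟨algebraMap ℂ 𝕃 c, Subalgebra.algebraMap_mem Cθ c⟩ : Cθ) • y ∈ G₀ :=
            G₀.smul_mem _ hy
          have h2 : c • y = (⟨algebraMap ℂ 𝕃 c, Subalgebra.algebraMap_mem Cθ c⟩ : Cθ) • y := by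
            show c • y = (algebraMap ℂ 𝕃 c) • y
            rw [algebraMap_smul]
          rw [h2]; exact h1 }
    have hW₀ : W₀ ∈ S := ⟨hg₀, hstab⟩
    exact sInf_le hW₀ hx
  exact Set.Subset.antisymm hsub2 hsub1
end
end

section
/- Let (G, D) be a connection of rank μ that is regular at 0, i.e. there exists a finitely generated ℂ[τ]-submodule L ⊆ G with ℂ[τ,τ⁻¹]·L = G and τ·D(L) ⊆ L. Let (V_β)_{β∈ℚ} be a family of ℂ[τ]-submodules of G satisfying all axioms of a Malgrange–Kashiwara filtration, except that axiom (iii) is weakened to: for each β there is a finite subset S ⊆ V_β such that V_β is the smallest ℂ[τ]-submodule of G containing S and stable under τ∘D. Then every V_β is a free ℂ[τ]-module of rank μ. -/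
open LaurentPolynomial

set_option synthInstance.maxHeartbeats 1000000
set_option maxHeartbeats 2000000

noncomputable section

variable {G : Type} [AddCommGroup G] [Module ℂ G] [Module 𝕃 G] [IsScalarTower ℂ 𝕃 G]

/-!
`ℂ[τ]` is a principal ideal domain and `ℂ[τ,τ⁻¹]` is its localization at `τ`. If `L` is a
`τ∂_τ`-stable lattice and `τ^k S ⊆ L`, then `{g | τ^k g ∈ L}` is again a `τ∂_τ`-stable lattice
(because `τ∂_τ(τ g) = τ (τ∂_τ g) + τ g`) containing `S`, hence it contains `V_β`. So `V_β` is
finitely generated and torsion free, thus free over `ℂ[τ]`. Axioms (i), (ii) and (iv) give, for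
every `g ∈ G`, some `n` with `τ^n g ∈ V_β`: `G` is the localization of `V_β` at `τ`, and
localization preserves the rank of a free module.
-/

theorem Submodule.isLocalizedModule_subtype {R : Type*} (Rₛ : Type*) {M : Type*} [CommRing R]
    [CommRing Rₛ] [Algebra R Rₛ] (S : Submonoid R) [IsLocalization S Rₛ] [AddCommGroup M]
    [Module R M] [Module Rₛ M] [IsScalarTower R Rₛ M] {N : Submodule R M}
    (hN : ∀ x : M, ∃ s : S, (s : R) • x ∈ N) : IsLocalizedModule S N.subtype where
  map_units s := by
    rw [← (Algebra.lsmul R (A := Rₛ) R M).commutes]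
    exact (IsLocalization.map_units Rₛ s).map _
  surj x := let ⟨s, hs⟩ := hN x; ⟨(⟨_, hs⟩, s), rfl⟩
  exists_of_eq h := ⟨1, congrArg _ (Subtype.ext h)⟩

theorem Submodule.isLocalizedModule_subtype_of_span_eq_top {R Rₛ M : Type*} [CommRing R]
    [CommRing Rₛ] [Algebra R Rₛ] (S : Submonoid R) [IsLocalization S Rₛ] [AddCommGroup M]
    [Module R M] [Module Rₛ M] [IsScalarTower R Rₛ M] {N : Submodule R M}
    (hN : span Rₛ (N : Set M) = ⊤) : IsLocalizedModule S N.subtype := by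
  refine isLocalizedModule_subtype Rₛ S fun x => ?_
  obtain ⟨y, hy, s, rfl⟩ := (IsLocalization.mem_span_iff S).mp (hN ▸ mem_top (x := x))
  refine ⟨s, ?_⟩
  rwa [← algebraMap_smul Rₛ, smul_smul, IsLocalization.mk'_spec', map_one, one_smul,
    ← span_eq N]

theorem Submodule.fg_of_le_comap_smul {R M : Type*} [CommRing R] [IsNoetherianRing R]
    [AddCommGroup M] [Module R M] {L N : Submodule R M} (hL : L.FG) {s : R}
    (hs : IsSMulRegular M s) (hN : N ≤ L.comap (s • LinearMap.id)) : N.FG :=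
  fg_of_fg_map_injective (s • LinearMap.id) (fun _ _ h => hs h)
    (hL.of_le (map_le_iff_le_comap.mpr hN))

lemma tau_mem_Cτ : τ ∈ Cτ := Algebra.self_mem_adjoin_singleton ℂ τ

def tauCτ : Cτ := ⟨τ, tau_mem_Cτ⟩

lemma range_toLaurentAlg : (Polynomial.toLaurentAlg : Polynomial ℂ →ₐ[ℂ] 𝕃).range = Cτ := by
  rw [Cτ, ← Algebra.map_top, ← Polynomial.adjoin_X, AlgHom.map_adjoin, Set.image_singleton,
    Polynomial.toLaurentAlg_apply, Polynomial.toLaurent_X, τ]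

def polynomialEquivCτ : Polynomial ℂ ≃ₐ[ℂ] Cτ :=
  (AlgEquiv.ofInjective _ Polynomial.toLaurent_injective).trans
    (Subalgebra.equivOfEq _ _ range_toLaurentAlg)

instance : IsPrincipalIdealRing Cτ :=
  .of_surjective polynomialEquivCτ.toRingHom polynomialEquivCτ.surjective

instance : IsLocalization.Away tauCτ 𝕃 := by
  have hX : polynomialEquivCτ Polynomial.X = tauCτ :=
    Subtype.ext (Polynomial.toLaurent_X (R := ℂ))
  refine IsLocalization.of_ringEquiv_left polynomialEquivCτ.symm.toRingEquiv
    (M₁ := Submonoid.powers Polynomial.X) ?_ fun x => ?_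
  · rw [Submonoid.map_powers, ← hX]
    exact congrArg _ (polynomialEquivCτ.symm_apply_apply _)
  · conv_lhs => rw [← polynomialEquivCτ.apply_symm_apply x]
    rfl

section Connection

variable {M : Type*} [AddCommGroup M] [Module ℂ M] [Module 𝕃 M]

def IsTauDStable (D : M →ₗ[ℂ] M) (W : Submodule Cτ M) : Prop := ∀ g ∈ W, τ • D g ∈ W

variable {dτ : Derivation ℂ 𝕃 𝕃} {D : M →ₗ[ℂ] M}

theorem IsTauDStable.comap_tau (hdτ : dτ τ = 1)
    (hD : ∀ (p : 𝕃) (g : M), D (p • g) = dτ p • g + p • D g) {W : Submodule Cτ M}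
    (hW : IsTauDStable D W) : IsTauDStable D (W.comap (tauCτ • LinearMap.id)) := by
  intro g (hg : τ • g ∈ W)
  show τ • τ • D g ∈ W
  have hτg : τ • τ • D g = τ • D (τ • g) - τ • g := by
    rw [hD, hdτ, one_smul, smul_add, add_sub_cancel_left]
  rw [hτg]
  exact sub_mem (hW _ hg) hg

theorem IsTauDStable.comap_tau_pow (hdτ : dτ τ = 1)
    (hD : ∀ (p : 𝕃) (g : M), D (p • g) = dτ p • g + p • D g) {W : Submodule Cτ M}
    (hW : IsTauDStable D W) (k : ℕ) :
    IsTauDStable D (W.comap ((tauCτ ^ k) • LinearMap.id)) := by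
  induction k with
  | zero => simpa using hW
  | succ k ih =>
    convert ih.comap_tau hdτ hD using 1
    ext g
    simp only [Submodule.mem_comap, LinearMap.smul_apply, LinearMap.id_apply, pow_succ,
      mul_smul]

theorem fg_of_minimal_isTauDStable (hdτ : dτ τ = 1)
    (hD : ∀ (p : 𝕃) (g : M), D (p • g) = dτ p • g + p • D g) {L N : Submodule Cτ M}
    (hLfg : L.FG) (hLspan : Submodule.span 𝕃 (L : Set M) = ⊤) (hL : IsTauDStable D L)
    (S : Finset M)
    (hN : ∀ W : Submodule Cτ M, (∀ x ∈ S, x ∈ W) → IsTauDStable D W → N ≤ W) : N.FG := by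
  have := Submodule.isLocalizedModule_subtype_of_span_eq_top (Submonoid.powers tauCτ) hLspan
  obtain ⟨⟨_, k, rfl⟩, hk⟩ :=
    IsLocalizedModule.exist_integer_multiples_of_finset (Submonoid.powers tauCτ) L.subtype S
  refine Submodule.fg_of_le_comap_smul hLfg ?_
    (hN _ (fun x hx => ?_) (hL.comap_tau_pow hdτ hD k))
  · have hu := IsLocalization.map_units 𝕃 (⟨tauCτ ^ k, k, rfl⟩ : Submonoid.powers tauCτ)
    exact fun x y h => hu.isSMulRegular M h
  · simpa [IsLocalizedModule.IsInteger] using hk x hx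

end Connection

section Filtration

variable {M : Type*} [AddCommGroup M] [Module 𝕃 M] {V : ℚ → Submodule Cτ M}

theorem tauCτ_pow_smul_mem (htau : ∀ β : ℚ, ∀ g ∈ V β, τ • g ∈ V (β - 1)) {γ : ℚ} {g : M}
    (hg : g ∈ V γ) (n : ℕ) : (tauCτ ^ n) • g ∈ V (γ - n) := by
  induction n with
  | zero => simpa using hg
  | succ n ih =>
    rw [pow_succ', mul_smul, Nat.cast_succ, ← sub_sub]
    exact htau _ _ ih

theorem isLocalizedModule_subtype_of_filtration (hmono : Monotone V)
    (hexh : ∀ g : M, ∃ β : ℚ, g ∈ V β) (htau : ∀ β : ℚ, ∀ g ∈ V β, τ • g ∈ V (β - 1))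
    (β : ℚ) : IsLocalizedModule (Submonoid.powers tauCτ) (V β).subtype := by
  refine Submodule.isLocalizedModule_subtype 𝕃 _ fun g => ?_
  obtain ⟨γ, hγ⟩ := hexh g
  refine ⟨⟨_, ⌈γ - β⌉₊, rfl⟩, hmono ?_ (tauCτ_pow_smul_mem htau hγ _)⟩
  linarith [Nat.le_ceil (γ - β)]

end Filtration

theorem statement5_general (μ : ℕ) (G : Type) [AddCommGroup G] [Module ℂ G] [Module 𝕃 G]
    [Module.Free 𝕃 G] (hrank : Module.finrank 𝕃 G = μ)
    (dτ : Derivation ℂ 𝕃 𝕃) (hdτ : dτ τ = 1)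
    (D : G →ₗ[ℂ] G) (hD : ∀ (p : 𝕃) (g : G), D (p • g) = dτ p • g + p • D g)
    -- regularity at 0
    (hreg : ∃ L : Submodule Cτ G, L.FG ∧ Submodule.span 𝕃 (L : Set G) = ⊤ ∧
      ∀ g ∈ L, τ • D g ∈ L)
    (V : ℚ → Submodule Cτ G)
    -- axioms (i), (ii)
    (hmono : ∀ ⦃β γ : ℚ⦄, β ≤ γ → V β ≤ V γ)
    (hexh : ∀ g : G, ∃ β : ℚ, g ∈ V β)
    -- axiom (iii), weakened: `V_β` is the smallest `ℂ[τ]`-submodule containing a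
    -- finite set `S` and stable under `τ∘D`
    (hgen : ∀ β : ℚ, ∃ S : Finset G, (∀ x ∈ S, x ∈ V β) ∧
      ∀ W : Submodule Cτ G, (∀ x ∈ S, x ∈ W) → (∀ x ∈ W, τ • D x ∈ W) → V β ≤ W)
    -- axiom (iv)
    (htau : ∀ β : ℚ, ∀ x : G, x ∈ V (β - 1) ↔ ∃ g ∈ V β, x = τ • g) :
    ∀ β : ℚ, Module.Free Cτ ↥(V β) ∧ Module.finrank Cτ ↥(V β) = μ := by
  intro β
  obtain ⟨L, hLfg, hLspan, hLstab⟩ := hreg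
  obtain ⟨S, -, hSmin⟩ := hgen β
  have : Module.Finite Cτ (V β) := Module.Finite.iff_fg.mpr
    (fg_of_minimal_isTauDStable hdτ hD hLfg hLspan hLstab S hSmin)
  have : Module.IsTorsionFree Cτ G := .trans_faithfulSMul Cτ 𝕃 G
  have : Module.Free Cτ (V β) := Module.free_of_finite_type_torsion_free' (R := Cτ) (M := V β)
  have := isLocalizedModule_subtype_of_filtration hmono hexh
    (fun β g hg => (htau β _).2 ⟨g, hg, rfl⟩) β
  refine ⟨inferInstance, Eq.trans ?_ hrank⟩
  exact (Module.finrank_of_isLocalizedModule_of_free (R := Cτ) (M := V β) 𝕃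
    (Submonoid.powers tauCτ) (V β).subtype).symm

/-- the steps of the Malgrange–Kashiwara filtration of a connection
which is regular at `0` are free `ℂ[τ]`-modules of rank `μ`. -/
theorem statement5 (μ : ℕ) (G : Type) [AddCommGroup G] [Module ℂ G] [Module 𝕃 G]
    [IsScalarTower ℂ 𝕃 G] [Module.Free 𝕃 G] (hrank : Module.finrank 𝕃 G = μ)
    (dτ : Derivation ℂ 𝕃 𝕃) (hdτ : dτ τ = 1)
    (D : G →ₗ[ℂ] G) (hD : ∀ (p : 𝕃) (g : G), D (p • g) = dτ p • g + p • D g)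
    -- regularity at 0
    (hreg : ∃ L : Submodule Cτ G, L.FG ∧ Submodule.span 𝕃 (L : Set G) = ⊤ ∧
      ∀ g ∈ L, τ • D g ∈ L)
    (V : ℚ → Submodule Cτ G)
    -- axioms (i), (ii)
    (hmono : ∀ ⦃β γ : ℚ⦄, β ≤ γ → V β ≤ V γ)
    (hexh : ∀ g : G, ∃ β : ℚ, g ∈ V β)
    -- axiom (iii), weakened: `V_β` is the smallest `ℂ[τ]`-submodule containing a
    -- finite set `S` and stable under `τ∘D`
    (hstable : ∀ β : ℚ, ∀ g ∈ V β, τ • D g ∈ V β)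
    (hgen : ∀ β : ℚ, ∃ S : Finset G, (∀ x ∈ S, x ∈ V β) ∧
      ∀ W : Submodule Cτ G, (∀ x ∈ S, x ∈ W) → (∀ x ∈ W, τ • D x ∈ W) → V β ≤ W)
    -- axiom (iv)
    (htau : ∀ β : ℚ, ∀ x : G, x ∈ V (β - 1) ↔ ∃ g ∈ V β, x = τ • g)
    -- axiom (v)
    (hdsh : ∀ β : ℚ, ∀ g ∈ V β, D g ∈ V (β + 1))
    (hgen' : ∃ β₀ : ℚ, ∀ β ≥ β₀, ∀ x : G, x ∈ V (β + 1) ↔ ∃ v ∈ V β, ∃ w ∈ V β, x = v + D w)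
    -- axiom (vi)
    (hdisc : ∃ A : Finset ℚ, (∀ a ∈ A, 0 ≤ a ∧ a < 1) ∧
      ∀ β : ℚ, (∀ a ∈ A, ∀ k : ℤ, β ≠ a + k) → ∀ x : G, x ∈ V β ↔ ∃ γ < β, x ∈ V γ)
    -- axiom (vii)
    (hnilp : ∀ β : ℚ, ∃ N : ℕ, ∀ x ∈ V β,
      ∃ γ < β, (((smulL τ ∘ₗ D + (β : ℂ) • LinearMap.id : G →ₗ[ℂ] G)) ^ N) x ∈ V γ) :
    ∀ β : ℚ, Module.Free Cτ ↥(V β) ∧ Module.finrank Cτ ↥(V β) = μ :=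
  statement5_general μ G hrank dτ hdτ D hD hreg V hmono hexh hgen htau
end
end
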